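/- Let J ≥ 1 be an integer, P a Borel probability measure on C([0,1]), x ∈ C([0,1]), and X_1, X_2, … an i.i.d. sequence of random elements of C([0,1]) with law P. Then, almost surely, |D_{J,n}(x) − D_J(x, P)| → 0 as n → ∞. -/

import Mathlib

/-!
The empirical depth is the U-statistic of order `J` whose kernel, the ratio of hull areas, is a
`[0,1]`-valued measurable function of `J` curves (the area of the convex hull of finitely many
graphs is upper semicontinuous in the curves). Kernel values on disjoint index sets are
independent, so only intersecting pairs of `J`-subsets contribute to the second moment, and
`E (U_n - D)² ≤ 1 - C(n-J,J)/C(n,J) ≤ J²/n`. Along `n = k²` these bounds are summable, giving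
almost sure convergence on that subsequence; between consecutive squares the U-statistic moves by
at most `1 - C(m,J)/C(n,J) ≤ J(n-m)/n = O(J/√n)`.
-/

open MeasureTheory Filter Topology
open scoped ENNReal

noncomputable section

abbrev I01 : Set ℝ := Set.Icc 0 1

abbrev CI := C(I01, ℝ)

noncomputable instance : MeasurableSpace CI := borel CI
instance : BorelSpace CI := ⟨rfl⟩

/-- The graph of a continuous function on `[0,1]`, as a subset of `ℝ²`. -/
def graph (x : CI) : Set (ℝ × ℝ) := Set.range fun t : I01 => ((t : ℝ), x t)

/-- The area (2-dimensional Lebesgue measure) of the convex hull of a set in `ℝ²`. -/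
def ach (A : Set (ℝ × ℝ)) : ℝ := (volume (convexHull ℝ A)).toReal

/-- Ratio of the area of the convex hull of the graphs of a batch of curves to the area of
the convex hull once `x` is added (`0/0 = 0` convention, as division by zero is zero). -/
def achRatio {m : ℕ} (xs : Fin m → CI) (x : CI) : ℝ :=
  ach (⋃ i, graph (xs i)) / ach ((⋃ i, graph (xs i)) ∪ graph x)

/-- The ACH depth of degree `J` of `x` w.r.t. `P`. -/
def ACHDepth (J : ℕ) (P : Measure CI) (x : CI) : ℝ :=
  ∫ xs, achRatio xs x ∂(Measure.pi fun _ : Fin J => P)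

/-- The average ACH depth of degree `J`. -/
def avgACHDepth (J : ℕ) (P : Measure CI) (x : CI) : ℝ :=
  (J : ℝ)⁻¹ * ∑ j ∈ Finset.Icc 1 J, ACHDepth j P x

/-- A curve is non-constant. -/
def Nonconstant (x : CI) : Prop := ¬ ∃ c : ℝ, ∀ t, x t = c

/-- The empirical ACH depth (`U`-statistic of degree `J`) based on the first `n` curves. -/
def empDepth (J n : ℕ) (X : ℕ → CI) (x : CI) : ℝ :=
  (n.choose J : ℝ)⁻¹ * ∑ s ∈ Finset.powersetCard J (Finset.range n),
    ach (⋃ i ∈ s, graph (X i)) / ach ((⋃ i ∈ s, graph (X i)) ∪ graph x)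

/-- The average empirical ACH depth. -/
def avgEmpDepth (J n : ℕ) (X : ℕ → CI) (x : CI) : ℝ :=
  (J : ℝ)⁻¹ * ∑ j ∈ Finset.Icc 1 J, empDepth j n X x

/-- The band delimited by a finite family of curves. -/
def band {m : ℕ} (xs : Fin m → CI) : Set (ℝ × ℝ) :=
  {p | ∃ t : I01, p.1 = (t : ℝ) ∧ (⨅ i, xs i t) ≤ p.2 ∧ p.2 ≤ ⨆ i, xs i t}

open Metric Set Finset ProbabilityTheory

theorem Nat.choose_le_choose_add_sub_mul_choose {m n : ℕ} (J : ℕ) (hmn : m ≤ n) :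
    n.choose J ≤ m.choose J + (n - m) * (n - 1).choose (J - 1) := by
  induction n, hmn using Nat.le_induction with
  | base => simp
  | succ n hmn ih =>
    cases J with
    | zero => simp
    | succ j =>
      calc (n + 1).choose (j + 1) = n.choose j + n.choose (j + 1) := Nat.choose_succ_succ n j
        _ ≤ n.choose j + (m.choose (j + 1) + (n - m) * (n - 1).choose j) := by
          simpa using Nat.add_le_add_left ih (n.choose j)
        _ ≤ n.choose j + (m.choose (j + 1) + (n - m) * n.choose j) := by
          gcongr
          omega
        _ = m.choose (j + 1) + (n + 1 - m) * (n + 1 - 1).choose (j + 1 - 1) := by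
          rw [Nat.add_sub_cancel, Nat.add_sub_cancel, Nat.sub_add_comm hmn]
          ring

theorem Nat.one_sub_choose_div_choose_le {J m n : ℕ} (hJ : 1 ≤ J) (hJn : J ≤ n) (hmn : m ≤ n) :
    1 - (m.choose J : ℝ) / n.choose J ≤ J * (n - m) / n := by
  have hr : (0 : ℝ) < n.choose J := by exact_mod_cast Nat.choose_pos hJn
  have hn : (0 : ℝ) < n := by exact_mod_cast hJ.trans hJn
  have hpascal : (n.choose J : ℝ) ≤ m.choose J + (n - m) * (n - 1).choose (J - 1) := by
    rw [← Nat.cast_sub hmn]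
    exact_mod_cast Nat.choose_le_choose_add_sub_mul_choose J hmn
  have habsorb : (n : ℝ) * (n - 1).choose (J - 1) = n.choose J * J := by
    have h := Nat.add_one_mul_choose_eq (n - 1) (J - 1)
    rw [Nat.sub_add_cancel (hJ.trans hJn), Nat.sub_add_cancel hJ] at h
    exact_mod_cast h
  rw [one_sub_div hr.ne', div_le_div_iff₀ hr hn]
  have hmn' : (0 : ℝ) ≤ n - m := sub_nonneg.2 (by exact_mod_cast hmn)
  nlinarith [mul_le_mul_of_nonneg_left hpascal hn.le]

lemma card_filter_not_disjoint_powersetCard {J n : ℕ} {s : Finset ℕ}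
    (hs : s ∈ powersetCard J (range n)) :
    #{t ∈ powersetCard J (range n) | ¬ Disjoint s t} = n.choose J - (n - J).choose J := by
  obtain ⟨hsub, hcard⟩ := mem_powersetCard.1 hs
  have hdisj : {t ∈ powersetCard J (range n) | Disjoint s t} = powersetCard J (range n \ s) := by
    ext t
    simp only [mem_filter, mem_powersetCard, Finset.subset_sdiff, disjoint_comm (a := s)]
    tauto
  rw [filter_not, card_sdiff_of_subset (filter_subset _ _), hdisj, card_powersetCard,
    card_powersetCard, card_sdiff_of_subset hsub, card_range, hcard]

def uStatistic (J n : ℕ) (H : Finset ℕ → ℝ) : ℝ :=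
  (n.choose J : ℝ)⁻¹ * ∑ s ∈ powersetCard J (range n), H s

section UStatistic

variable {J : ℕ} {H : Finset ℕ → ℝ}

lemma sum_powersetCard_range_mem_Icc (hH : ∀ s, H s ∈ Icc (0 : ℝ) 1) (n : ℕ) :
    ∑ s ∈ powersetCard J (range n), H s ∈ Icc (0 : ℝ) (n.choose J) := by
  refine ⟨sum_nonneg fun s _ => (hH s).1, ?_⟩
  simpa using sum_le_card_nsmul (powersetCard J (range n)) H 1 fun s _ => (hH s).2

lemma uStatistic_mul_choose (n : ℕ) (H : Finset ℕ → ℝ) :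
    uStatistic J n H * n.choose J = ∑ s ∈ powersetCard J (range n), H s := by
  rcases Nat.eq_zero_or_pos (n.choose J) with h | h
  · have hempty : powersetCard J (range n) = ∅ :=
      powersetCard_eq_empty.2 (by simpa using Nat.choose_eq_zero_iff.1 h)
    rw [h, Nat.cast_zero, mul_zero, hempty, sum_empty]
  · rw [uStatistic, mul_comm, ← mul_assoc, mul_inv_cancel₀ (by positivity), one_mul]

lemma uStatistic_mem_Icc (hH : ∀ s, H s ∈ Icc (0 : ℝ) 1) (n : ℕ) :
    uStatistic J n H ∈ Icc (0 : ℝ) 1 := by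
  have hsum := sum_powersetCard_range_mem_Icc hH n (J := J)
  exact ⟨mul_nonneg (by positivity) hsum.1, inv_mul_le_one_of_le₀ hsum.2 (by positivity)⟩

lemma abs_uStatistic_sub_uStatistic_le (hH : ∀ s, H s ∈ Icc (0 : ℝ) 1) {m n : ℕ} (hmn : m ≤ n) :
    |uStatistic J n H - uStatistic J m H| ≤ 1 - (m.choose J : ℝ) / n.choose J := by
  have hqr : m.choose J ≤ n.choose J := Nat.choose_le_choose J hmn
  rcases Nat.eq_zero_or_pos (n.choose J) with hr | hr
  · simp [uStatistic, hr, Nat.eq_zero_of_le_zero (hr ▸ hqr)]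
  have hsub : powersetCard J (range m) ⊆ powersetCard J (range n) :=
    powersetCard_mono (range_subset_range.2 hmn)
  set new := powersetCard J (range n) \ powersetCard J (range m)
  have hnew : ∑ s ∈ new, H s ∈ Icc (0 : ℝ) (n.choose J - m.choose J) := by
    refine ⟨sum_nonneg fun s _ => (hH s).1, ?_⟩
    have := sum_le_card_nsmul new H 1 fun s _ => (hH s).2
    rwa [card_sdiff_of_subset hsub, card_powersetCard, card_powersetCard, card_range,
      card_range, nsmul_one, Nat.cast_sub hqr] at this
  have hsplit : uStatistic J n H * n.choose J
      = ∑ s ∈ new, H s + uStatistic J m H * m.choose J := by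
    rw [uStatistic_mul_choose n H, uStatistic_mul_choose m H, sum_sdiff hsub]
  have hUm := uStatistic_mem_Icc hH m (J := J)
  have hr' : (0 : ℝ) < n.choose J := by exact_mod_cast hr
  rw [one_sub_div hr'.ne', le_div_iff₀ hr', ← abs_of_pos hr', ← abs_mul, abs_of_pos hr', sub_mul,
    hsplit, abs_le]
  constructor <;> nlinarith [hnew.1, hnew.2, hUm.1, hUm.2]

end UStatistic

lemma tendsto_of_tendsto_comp_sq {u : ℕ → ℝ} {D C : ℝ} (N : ℕ)
    (hsq : Tendsto (fun k => u (k ^ 2)) atTop (𝓝 D))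
    (hgap : ∀ m n, N ≤ m → m ≤ n → |u n - u m| ≤ C * (n - m) / n) :
    Tendsto u atTop (𝓝 D) := by
  have hsqrt : Tendsto Nat.sqrt atTop atTop :=
    tendsto_atTop_atTop.2 fun b => ⟨b ^ 2, fun n hn => Nat.le_sqrt'.2 hn⟩
  have hbound : Tendsto (fun n : ℕ => 2 * |C| / (n.sqrt : ℝ)) atTop (𝓝 0) :=
    (tendsto_const_div_atTop_nhds_zero_nat (2 * |C|)).comp hsqrt
  have hclose : Tendsto (fun n : ℕ => u n - u (n.sqrt ^ 2)) atTop (𝓝 0) := by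
    refine squeeze_zero_norm' ?_ hbound
    filter_upwards [hsqrt.eventually_ge_atTop (max N 1)] with n hn
    set r := n.sqrt
    have hr : (1 : ℝ) ≤ r := by exact_mod_cast (le_max_right N 1).trans hn
    have hlow : (r : ℝ) ^ 2 ≤ n := by exact_mod_cast Nat.sqrt_le' n
    have hhigh : (n : ℝ) ≤ r ^ 2 + 2 * r := by
      have hlt : n < (r + 1) ^ 2 := Nat.lt_succ_sqrt' n
      have : n ≤ r ^ 2 + 2 * r := by nlinarith
      exact_mod_cast this
    have hNr : N ≤ r ^ 2 := ((le_max_left N 1).trans hn).trans (Nat.le_self_pow two_ne_zero r)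
    calc ‖u n - u (r ^ 2)‖ ≤ C * (n - (r ^ 2 : ℕ)) / n := hgap _ _ hNr (Nat.sqrt_le' n)
      _ ≤ |C| * (2 * r) / r ^ 2 := by
        push_cast
        gcongr
        · exact le_abs_self C
        · linarith
      _ = 2 * |C| / r := by field_simp
  simpa using hclose.add (hsq.comp hsqrt)

section Probability

variable {Ω : Type*} [MeasurableSpace Ω] {μ : Measure Ω}

lemma ae_tendsto_zero_of_summable_integral {Z : ℕ → Ω → ℝ} (hZ : ∀ k ω, 0 ≤ Z k ω)
    (hint : ∀ k, Integrable (Z k) μ) (hsum : Summable fun k => ∫ ω, Z k ω ∂μ) :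
    ∀ᵐ ω ∂μ, Tendsto (fun k => Z k ω) atTop (𝓝 0) := by
  have hmeas : ∀ k, AEMeasurable (fun ω => ENNReal.ofReal (Z k ω)) μ := fun k =>
    (hint k).aemeasurable.ennreal_ofReal
  have hfin : ∫⁻ ω, ∑' k, ENNReal.ofReal (Z k ω) ∂μ ≠ ∞ := by
    rw [lintegral_tsum hmeas]
    simp_rw [← ofReal_integral_eq_lintegral_ofReal (hint _) (ae_of_all _ (hZ _))]
    rw [← ENNReal.ofReal_tsum_of_nonneg (fun k => integral_nonneg (hZ k)) hsum]
    exact ENNReal.ofReal_ne_top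
  filter_upwards [ae_lt_top' (AEMeasurable.tsum hmeas) hfin] with ω hω
  have := (ENNReal.tendsto_toReal ENNReal.zero_ne_top).comp
    (ENNReal.tendsto_atTop_zero_of_tsum_ne_top hω.ne)
  simpa [Function.comp_def, ENNReal.toReal_ofReal (hZ _ ω)] using this

variable [IsProbabilityMeasure μ]

lemma integral_mem_Icc_of_mem_Icc {f : Ω → ℝ} (hf : ∀ ω, f ω ∈ Icc (0 : ℝ) 1) :
    ∫ ω, f ω ∂μ ∈ Icc (0 : ℝ) 1 := by
  refine ⟨integral_nonneg fun ω => (hf ω).1, (le_abs_self _).trans ?_⟩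
  simpa using norm_integral_le_of_norm_le_const (μ := μ) (f := f) (C := 1) (ae_of_all _ fun ω => by
    simpa [abs_of_nonneg (hf ω).1] using (hf ω).2)

lemma integral_sq_sum_le_sum_card_filter {α : Type*} (S : Finset α) {f : α → Ω → ℝ}
    (hmeas : ∀ a, Measurable (f a)) (hbd : ∀ a ω, |f a ω| ≤ 1) (R : α → α → Prop)
    [DecidableRel R] (horth : ∀ a ∈ S, ∀ b ∈ S, ¬ R a b → ∫ ω, f a ω * f b ω ∂μ = 0) :
    ∫ ω, (∑ a ∈ S, f a ω) ^ 2 ∂μ ≤ ∑ a ∈ S, (#{b ∈ S | R a b} : ℝ) := by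
  have hbd2 : ∀ a b ω, ‖f a ω * f b ω‖ ≤ 1 := fun a b ω => by
    rw [Real.norm_eq_abs, abs_mul]
    exact mul_le_one₀ (hbd a ω) (abs_nonneg _) (hbd b ω)
  have hint : ∀ a b, Integrable (fun ω => f a ω * f b ω) μ := fun a b =>
    .of_bound ((hmeas a).mul (hmeas b)).aestronglyMeasurable 1 (ae_of_all _ (hbd2 a b))
  have hpair : ∀ a ∈ S, ∀ b ∈ S, ∫ ω, f a ω * f b ω ∂μ ≤ if R a b then 1 else 0 := by
    intro a ha b hb
    split_ifs with h
    · simpa using (le_abs_self _).trans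
        (norm_integral_le_of_norm_le_const (μ := μ) (ae_of_all _ (hbd2 a b)))
    · exact (horth a ha b hb h).le
  simp_rw [sq, sum_mul_sum]
  rw [integral_finsetSum _ fun a _ => integrable_finsetSum _ fun b _ => hint a b]
  refine sum_le_sum fun a ha => ?_
  rw [integral_finsetSum _ fun b _ => hint a b, ← sum_boole]
  exact sum_le_sum fun b hb => hpair a ha b hb

lemma integral_sq_uStatistic_sub_le {J n : ℕ} (hJ : 1 ≤ J) (hJn : J ≤ n)
    {H : Finset ℕ → Ω → ℝ} (hmeas : ∀ s, Measurable (H s)) (hH : ∀ s ω, H s ω ∈ Icc (0 : ℝ) 1)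
    {D : ℝ} (hmean : ∀ s, #s = J → ∫ ω, H s ω ∂μ = D)
    (hindep : ∀ s t, Disjoint s t → IndepFun (H s) (H t) μ) :
    ∫ ω, (uStatistic J n (fun s => H s ω) - D) ^ 2 ∂μ ≤ J ^ 2 / n := by
  set PJ := powersetCard J (range n)
  have hr : (0 : ℝ) < n.choose J := by exact_mod_cast Nat.choose_pos hJn
  have hD : D ∈ Icc (0 : ℝ) 1 := hmean (range J) (card_range J) ▸ integral_mem_Icc_of_mem_Icc (hH _)
  have hcentre : ∀ ω, uStatistic J n (fun s => H s ω) - D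
      = (n.choose J : ℝ)⁻¹ * ∑ s ∈ PJ, (H s ω - D) := by
    intro ω
    rw [sum_sub_distrib, sum_const, card_powersetCard, card_range, nsmul_eq_mul, mul_sub,
      inv_mul_cancel_left₀ hr.ne', uStatistic]
  have hL2 : ∀ s, MemLp (H s) 2 μ := fun s => .of_bound (hmeas s).aestronglyMeasurable 1
    (ae_of_all _ fun ω => by simpa [abs_of_nonneg (hH s ω).1] using (hH s ω).2)
  have horth : ∀ s ∈ PJ, ∀ t ∈ PJ, ¬ ¬ Disjoint s t →
      ∫ ω, (H s ω - D) * (H t ω - D) ∂μ = 0 := by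
    intro s hs t ht hst
    have hcov := (hindep s t (not_not.1 hst)).covariance_eq_zero (hL2 s) (hL2 t)
    rwa [covariance, hmean s (mem_powersetCard.1 hs).2, hmean t (mem_powersetCard.1 ht).2] at hcov
  have hbd : ∀ s ω, |H s ω - D| ≤ 1 := fun s ω =>
    abs_le.2 ⟨by linarith [(hH s ω).1, hD.2], by linarith [(hH s ω).2, hD.1]⟩
  have hcount : ∑ s ∈ PJ, (#{t ∈ PJ | ¬ Disjoint s t} : ℝ)
      = n.choose J * (n.choose J - (n - J).choose J) := by
    rw [sum_congr rfl fun s hs => by rw [card_filter_not_disjoint_powersetCard hs], sum_const,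
      card_powersetCard, card_range, nsmul_eq_mul,
      Nat.cast_sub (Nat.choose_le_choose J (n.sub_le J))]
  calc ∫ ω, (uStatistic J n (fun s => H s ω) - D) ^ 2 ∂μ
      = ((n.choose J : ℝ)⁻¹) ^ 2 * ∫ ω, (∑ s ∈ PJ, (H s ω - D)) ^ 2 ∂μ := by
        simp_rw [hcentre, mul_pow, integral_const_mul]
    _ ≤ ((n.choose J : ℝ)⁻¹) ^ 2 * (n.choose J * (n.choose J - (n - J).choose J)) := by
        rw [← hcount]
        gcongr
        exact integral_sq_sum_le_sum_card_filter PJ (fun s => (hmeas s).sub_const D) hbd _ horth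
    _ = 1 - ((n - J).choose J : ℝ) / n.choose J := by field_simp
    _ ≤ J * (n - (n - J : ℕ)) / n := Nat.one_sub_choose_div_choose_le hJ hJn (n.sub_le J)
    _ = J ^ 2 / n := by rw [Nat.cast_sub hJn]; ring

lemma ae_tendsto_uStatistic_sq {J : ℕ} (hJ : 1 ≤ J)
    {H : Finset ℕ → Ω → ℝ} (hmeas : ∀ s, Measurable (H s)) (hH : ∀ s ω, H s ω ∈ Icc (0 : ℝ) 1)
    {D : ℝ} (hmean : ∀ s, #s = J → ∫ ω, H s ω ∂μ = D)
    (hindep : ∀ s t, Disjoint s t → IndepFun (H s) (H t) μ) :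
    ∀ᵐ ω ∂μ, Tendsto (fun k => uStatistic J (k ^ 2) (fun s => H s ω)) atTop (𝓝 D) := by
  have hD : D ∈ Icc (0 : ℝ) 1 :=
    hmean (range J) (card_range J) ▸ integral_mem_Icc_of_mem_Icc (hH _)
  set Z : ℕ → Ω → ℝ := fun k ω => (uStatistic J ((k + J) ^ 2) (fun s => H s ω) - D) ^ 2
  have hZint : ∀ k, Integrable (Z k) μ := fun k => by
    refine .of_bound ((((Finset.measurable_sum _ fun s _ => hmeas s).const_mul _).sub_const
      D).pow_const 2).aestronglyMeasurable 1 (ae_of_all _ fun ω => ?_)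
    have hU := uStatistic_mem_Icc (J := J) (hH · ω) ((k + J) ^ 2)
    rw [Real.norm_eq_abs, abs_pow, pow_le_one_iff_of_nonneg (abs_nonneg _) two_ne_zero, abs_le]
    constructor <;> linarith [hU.1, hU.2, hD.1, hD.2]
  have hsum : Summable fun k => ∫ ω, Z k ω ∂μ := by
    have hdom : Summable fun k : ℕ => (J : ℝ) ^ 2 / (((k + J) ^ 2 : ℕ) : ℝ) := by
      refine (((summable_nat_add_iff J).2 (Real.summable_one_div_nat_pow.2 one_lt_two)).mul_left
        ((J : ℝ) ^ 2)).congr fun k => ?_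
      push_cast
      ring
    exact hdom.of_nonneg_of_le (fun k => integral_nonneg fun ω => sq_nonneg _) fun k =>
      integral_sq_uStatistic_sub_le hJ ((J.le_add_left k).trans (Nat.le_self_pow two_ne_zero _))
        hmeas hH hmean hindep
  filter_upwards [ae_tendsto_zero_of_summable_integral (fun k ω => sq_nonneg _) hZint hsum]
    with ω hω
  refine (tendsto_add_atTop_iff_nat J).1 (tendsto_iff_norm_sub_tendsto_zero.2 ?_)
  simpa [Z, Real.sqrt_sq_eq_abs] using hω.sqrt

theorem ae_tendsto_uStatistic {J : ℕ} (hJ : 1 ≤ J)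
    {H : Finset ℕ → Ω → ℝ} (hmeas : ∀ s, Measurable (H s)) (hH : ∀ s ω, H s ω ∈ Icc (0 : ℝ) 1)
    {D : ℝ} (hmean : ∀ s, #s = J → ∫ ω, H s ω ∂μ = D)
    (hindep : ∀ s t, Disjoint s t → IndepFun (H s) (H t) μ) :
    ∀ᵐ ω ∂μ, Tendsto (fun n => uStatistic J n (fun s => H s ω)) atTop (𝓝 D) := by
  filter_upwards [ae_tendsto_uStatistic_sq hJ hmeas hH hmean hindep] with ω hsq
  refine tendsto_of_tendsto_comp_sq (C := J) J hsq fun m n hJm hmn => ?_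
  exact (abs_uStatistic_sub_uStatistic_le (hH · ω) hmn).trans
    (Nat.one_sub_choose_div_choose_le hJ (hJm.trans hmn) hmn)

end Probability

theorem Convex.tendsto_addHaar_thickening {E : Type*} [NormedAddCommGroup E] [NormedSpace ℝ E]
    [FiniteDimensional ℝ E] [MeasurableSpace E] [BorelSpace E] (μ : Measure E)
    [μ.IsAddHaarMeasure] {C : Set E} (hC : Convex ℝ C) (hb : Bornology.IsBounded C) :
    Tendsto (fun δ => μ (Metric.thickening δ C)) (𝓝[>] 0) (𝓝 (μ C)) := by
  rw [← measure_closure_of_null_frontier (hC.addHaar_frontier μ)]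
  exact tendsto_measure_thickening ⟨1, one_pos, hb.thickening.measure_lt_top.ne⟩

lemma isCompact_graph (x : CI) : IsCompact (graph x) := isCompact_range (by fun_prop)

lemma graph_subset_thickening {x y : CI} {δ : ℝ} (h : dist x y < δ) :
    graph x ⊆ thickening δ (graph y) := by
  rintro _ ⟨t, rfl⟩
  refine mem_thickening_iff.2 ⟨((t : ℝ), y t), ⟨t, rfl⟩, ?_⟩
  simpa [Prod.dist_eq] using (ContinuousMap.dist_apply_le_dist t).trans_lt h

lemma isBounded_iUnion_graph {ι : Type*} [Finite ι] (xs : ι → CI) :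
    Bornology.IsBounded (⋃ i, graph (xs i)) :=
  (isCompact_iUnion fun i => isCompact_graph (xs i)).isBounded

lemma upperSemicontinuous_volume_convexHull_iUnion_graph_union {ι : Type*} [Fintype ι]
    {K : Set (ℝ × ℝ)} (hK : Bornology.IsBounded K) :
    UpperSemicontinuous fun xs : ι → CI => volume (convexHull ℝ ((⋃ i, graph (xs i)) ∪ K)) := by
  intro xs c hc
  set C := convexHull ℝ ((⋃ i, graph (xs i)) ∪ K)
  have hCconv : Convex ℝ C := convex_convexHull ℝ _
  have hCb : Bornology.IsBounded C :=
    isBounded_convexHull.2 ((isBounded_iUnion_graph xs).union hK)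
  obtain ⟨δ, hδc, hδ⟩ := (((hCconv.tendsto_addHaar_thickening volume hCb).eventually_lt_const
    hc).and self_mem_nhdsWithin).exists
  -- the hull for curves `δ`-close to `xs` lies in the convex set `thickening δ C`
  filter_upwards [ball_mem_nhds xs hδ] with ys hys
  refine lt_of_le_of_lt (measure_mono (convexHull_min ?_ (hCconv.thickening δ))) hδc
  have hC : (⋃ i, graph (xs i)) ∪ K ⊆ C := subset_convexHull ℝ _
  refine union_subset (iUnion_subset fun i => ?_) ((subset_union_right.trans hC).trans
    (self_subset_thickening hδ C))
  exact (graph_subset_thickening ((dist_le_pi_dist ys xs i).trans_lt hys)).trans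
    (thickening_subset_of_subset δ ((subset_iUnion _ i).trans (subset_union_left.trans hC)))

lemma measurable_ach_iUnion_graph_union {ι : Type*} [Fintype ι] {K : Set (ℝ × ℝ)}
    (hK : Bornology.IsBounded K) :
    Measurable fun xs : ι → CI => ach ((⋃ i, graph (xs i)) ∪ K) :=
  (upperSemicontinuous_volume_convexHull_iUnion_graph_union hK).measurable.ennreal_toReal

-- `achRatio` for an arbitrary finite index type; the two agree by `rfl` on `Fin m`.
def hullRatio {ι : Type*} (xs : ι → CI) (x : CI) : ℝ :=
  ach (⋃ i, graph (xs i)) / ach ((⋃ i, graph (xs i)) ∪ graph x)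

lemma measurable_hullRatio {ι : Type*} [Fintype ι] (x : CI) :
    Measurable fun xs : ι → CI => hullRatio xs x := by
  have hnum := measurable_ach_iUnion_graph_union (ι := ι) Bornology.isBounded_empty
  simp only [union_empty] at hnum
  exact hnum.div (measurable_ach_iUnion_graph_union (isCompact_graph x).isBounded)

lemma ach_div_ach_mem_Icc {A B : Set (ℝ × ℝ)} (hAB : A ⊆ B) (hB : Bornology.IsBounded B) :
    ach A / ach B ∈ Icc (0 : ℝ) 1 :=
  ⟨by unfold ach; positivity, div_le_one_of_le₀ (ENNReal.toReal_mono
    (isBounded_convexHull.2 hB).measure_lt_top.ne (measure_mono (convexHull_mono hAB)))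
    ENNReal.toReal_nonneg⟩

lemma hullRatio_mem_Icc {ι : Type*} [Finite ι] (xs : ι → CI) (x : CI) :
    hullRatio xs x ∈ Icc (0 : ℝ) 1 :=
  ach_div_ach_mem_Icc subset_union_left
    ((isBounded_iUnion_graph xs).union (isCompact_graph x).isBounded)

lemma hullRatio_comp_equiv {ι κ : Type*} (σ : κ ≃ ι) (xs : ι → CI) (x : CI) :
    hullRatio (xs ∘ σ) x = hullRatio xs x := by
  simp only [hullRatio, Function.comp_apply, σ.surjective.iUnion_comp (fun i => graph (xs i))]

lemma empDepth_eq_uStatistic (J n : ℕ) (g : ℕ → CI) (x : CI) :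
    empDepth J n g x = uStatistic J n fun s => hullRatio (fun i : s => g i) x := by
  simp only [empDepth, uStatistic, hullRatio, iUnion_subtype]

lemma integral_hullRatio_eq_ACHDepth {Ω : Type*} [MeasurableSpace Ω] {μ : Measure Ω}
    {P : Measure CI} {X : ℕ → Ω → CI} (hmeas : ∀ i, Measurable (X i))
    (hlaw : ∀ i, μ.map (X i) = P) (hindep : iIndepFun X μ) (x : CI) {J : ℕ} {s : Finset ℕ}
    (hs : #s = J) :
    ∫ ω, hullRatio (fun i : s => X i ω) x ∂μ = ACHDepth J P x := by
  set σ : Fin J ≃ s := (s.orderIsoOfFin hs).toEquiv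
  have hmap : μ.map (fun ω k => X (σ k) ω) = Measure.pi fun _ => P := by
    simpa only [Function.comp_apply, hlaw] using
      (hindep.precomp (Subtype.val_injective.comp σ.injective)).map_fun_eq_pi_map
        fun k => (hmeas _).aemeasurable
  calc ∫ ω, hullRatio (fun i : s => X i ω) x ∂μ = ∫ ω, achRatio (fun k => X (σ k) ω) x ∂μ := by
        congr with ω
        exact (hullRatio_comp_equiv σ _ x).symm
    _ = ACHDepth J P x := by
        rw [ACHDepth, ← hmap, integral_map (measurable_pi_lambda _ fun k => hmeas _).aemeasurable
          (f := fun xs => achRatio xs x) (measurable_hullRatio x).aestronglyMeasurable]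

theorem empDepth_consistency_general {Ω : Type} [MeasurableSpace Ω]
    (μ : Measure Ω) [IsProbabilityMeasure μ]
    (J : ℕ) (hJ : 1 ≤ J) (P : Measure CI) (x : CI)
    (X : ℕ → Ω → CI) (hmeas : ∀ i, Measurable (X i))
    (hlaw : ∀ i, Measure.map (X i) μ = P)
    (hindep : ProbabilityTheory.iIndepFun X μ) :
    ∀ᵐ ω ∂μ,
      Tendsto (fun n => |empDepth J n (fun i => X i ω) x - ACHDepth J P x|) atTop (𝓝 0) := by
  have hconv := ae_tendsto_uStatistic (μ := μ) hJ
    (H := fun s ω => hullRatio (fun i : s => X i ω) x)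
    (fun s => (measurable_hullRatio x).comp (measurable_pi_lambda _ fun i => hmeas i))
    (fun s ω => hullRatio_mem_Icc _ x)
    (fun s hs => integral_hullRatio_eq_ACHDepth hmeas hlaw hindep x hs)
    (fun s t hst => (hindep.indepFun_finset s t hst hmeas).comp (measurable_hullRatio x)
      (measurable_hullRatio x))
  filter_upwards [hconv] with ω hω
  simpa [empDepth_eq_uStatistic, ← Real.dist_eq] using tendsto_iff_dist_tendsto_zero.1 hω

/-- strong consistency of the empirical ACH depth. -/
theorem empDepth_consistency {Ω : Type} [MeasurableSpace Ω]
    (μ : Measure Ω) [IsProbabilityMeasure μ]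
    (J : ℕ) (hJ : 1 ≤ J) (P : Measure CI) [IsProbabilityMeasure P] (x : CI)
    (X : ℕ → Ω → CI) (hmeas : ∀ i, Measurable (X i))
    (hlaw : ∀ i, Measure.map (X i) μ = P)
    (hindep : ProbabilityTheory.iIndepFun X μ) :
    ∀ᵐ ω ∂μ,
      Tendsto (fun n => |empDepth J n (fun i => X i ω) x - ACHDepth J P x|) atTop (𝓝 0) :=
  empDepth_consistency_general μ J hJ P x X hmeas hlaw hindep

end
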